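/- Let p be a prime number and let A be any associative (possibly noncommutative) ring. If a, b ∈ A satisfy a − b ∈ pA + [A,A], then a^p − b^p ∈ pA + [A,A]. In other words, the p-th power map is well defined on the quotient abelian group A/(pA + [A,A]). -/

import Mathlib

/-!
Expanding `(∑ i, f i) ^ p` in a noncommutative ring gives the sum, over all words `w` of length
`p` in the letters `i`, of the products `f (w 0) * ⋯ * f (w (p - 1))`. Rotating a word cyclically
changes its product by a commutator, and the rotations form a group of order `p`. Modulo
`pA + [A,A]` each orbit of non-constant words therefore contributes `p` times one class, which is
zero, and only the constant words survive: `(∑ i, f i) ^ p ≡ ∑ i, f i ^ p`. So `a ↦ a ^ p` induces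
an additive map `A → A ⧸ (pA + [A,A])`. This map kills `p • c` and every commutator `x * y - y * x`,
because `(x * y) ^ p - (y * x) ^ p` is again a commutator, so it kills all of `pA + [A,A]`.
-/

/-- The additive subgroup `p·A + [A,A]` of a ring `A`. -/
def pCommutatorAddSubgroup (p : ℕ) (A : Type*) [Ring A] : AddSubgroup A :=
  AddSubgroup.closure ({x : A | ∃ c : A, x = p • c} ∪ {z : A | ∃ x y : A, z = x * y - y * x})

open Finset MulAction

theorem List.ofFn_comp_finRotate {α : Type*} {n : ℕ} (v : Fin n → α) :
    List.ofFn (v ∘ finRotate n) = (List.ofFn v).rotate 1 := by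
  cases n with
  | zero => rfl
  | succ m =>
    rw [List.ofFn_succ', List.ofFn_succ, List.rotate_cons_succ, List.rotate_zero]
    simp [Fin.coeSucc_eq_succ]

theorem Fintype.sum_pow_eq_sum_prod_ofFn {ι R : Type*} [Fintype ι] [Semiring R] (f : ι → R)
    (n : ℕ) :
    (∑ i, f i) ^ n = ∑ w : Fin n → ι, (List.ofFn (f ∘ w)).prod := by
  induction n with
  | zero => simp
  | succ n ih =>
    rw [pow_succ', ih, sum_mul_sum, ← (Fin.consEquiv fun _ => ι).sum_comp, Fintype.sum_prod_type]
    simp [Fin.consEquiv, List.ofFn_succ, Function.comp_def]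

def wordRotation (n : ℕ) (ι : Type*) : Equiv.Perm (Fin n → ι) :=
  (finRotate n).symm.arrowCongr (Equiv.refl ι)

theorem wordRotation_apply {n : ℕ} {ι : Type*} (w : Fin n → ι) :
    wordRotation n ι w = w ∘ finRotate n :=
  rfl

open Fin.NatCast in
theorem wordRotation_pow_apply {n : ℕ} [NeZero n] {ι : Type*} (k : ℕ) (w : Fin n → ι)
    (i : Fin n) :
    (wordRotation n ι ^ k) w i = w (i + k) := by
  induction k generalizing i with
  | zero => simp
  | succ k ih =>
    rw [pow_succ', Equiv.Perm.mul_apply, wordRotation_apply, Function.comp_apply, finRotate_apply,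
      ih, Nat.cast_succ, add_assoc, add_comm (1 : Fin n)]

theorem wordRotation_pow_self (n : ℕ) [NeZero n] (ι : Type*) : wordRotation n ι ^ n = 1 := by
  ext w i
  simp [wordRotation_pow_apply]

theorem eq_const_of_wordRotation_eq {n : ℕ} [NeZero n] {ι : Type*} {w : Fin n → ι}
    (hw : wordRotation n ι w = w) : w = Function.const _ (w 0) := by
  funext i
  have := congrFun (Equiv.Perm.pow_apply_eq_self_of_apply_eq_self hw i.val) 0
  simpa [wordRotation_pow_apply] using this

theorem IsPGroup.sum_eq_sum_fixedPoints {p : ℕ} [Fact p.Prime] {G α M : Type*} [Group G]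
    [MulAction G α] [Fintype α] [DecidablePred (· ∈ fixedPoints G α)] [AddCommMonoid M]
    (hG : IsPGroup p G) {F : α → M} (hF : ∀ (g : G) (a : α), F (g • a) = F a)
    (hM : ∀ m : M, p • m = 0) :
    ∑ a, F a = ∑ a with a ∈ fixedPoints G α, F a := by
  classical
  suffices ∑ a with a ∉ fixedPoints G α, F a = 0 by
    rw [← sum_filter_add_sum_filter_not univ (· ∈ fixedPoints G α), this, add_zero]
  rw [sum_partition (orbitRel G α)]
  refine sum_eq_zero fun c hc => ?_
  obtain ⟨a, ha, rfl⟩ := mem_image.mp hc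
  have ha : a ∉ fixedPoints G α := (mem_filter.mp ha).2
  have horbit : ({b | b ∉ fixedPoints G α} : Finset α).filter
      (fun b => (⟦b⟧ : Quotient (orbitRel G α)) = ⟦a⟧) = (orbit G a).toFinset := by
    ext b
    simp only [mem_filter, mem_univ, true_and, Set.mem_toFinset, Quotient.eq, orbitRel_apply]
    refine ⟨And.right, fun hb => ⟨fun hfix => ha ?_, hb⟩⟩
    obtain ⟨g, rfl⟩ := hb
    have : a = g • a := (inv_smul_smul g a).symm.trans (hfix g⁻¹)
    rw [this]
    exact hfix
  obtain ⟨n, hn⟩ := hG.card_orbit a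
  obtain ⟨k, rfl⟩ : ∃ k, n = k + 1 := by
    refine Nat.exists_eq_succ_of_ne_zero fun hn0 => ha ?_
    rw [mem_fixedPoints_iff_card_orbit_eq_one, ← Nat.card_eq_fintype_card, hn, hn0, pow_zero]
  have hconst : ∀ b ∈ (orbit G a).toFinset, F b = F a := by
    rintro _ hb
    obtain ⟨g, rfl⟩ := Set.mem_toFinset.mp hb
    exact hF g a
  rw [horbit, sum_congr rfl hconst, sum_const, Set.toFinset_card, ← Nat.card_eq_fintype_card, hn,
    pow_succ, mul_nsmul, hM]

theorem Equiv.Perm.sum_eq_sum_fixed_of_pow_eq_one {p : ℕ} [hp : Fact p.Prime] {α M : Type*}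
    [Fintype α] [DecidableEq α] [AddCommMonoid M] {σ : Equiv.Perm α} (hσ : σ ^ p = 1)
    {F : α → M} (hF : ∀ a, F (σ a) = F a) (hM : ∀ m : M, p • m = 0) :
    ∑ a, F a = ∑ a with σ a = a, F a := by
  classical
  have hG : IsPGroup p (Subgroup.zpowers σ) := by
    obtain ⟨k, -, hk⟩ := (Nat.dvd_prime_pow hp.out).mp
      (orderOf_dvd_of_pow_eq_one ((pow_one p).symm ▸ hσ))
    exact IsPGroup.of_card ((Nat.card_zpowers σ).trans hk)
  have hFzpow : ∀ (g : Subgroup.zpowers σ) (a : α), F (g • a) = F a := by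
    rintro ⟨_, k, rfl⟩ a
    change F ((σ ^ k) a) = F a
    induction k using Int.induction_on generalizing a with
    | zero => rfl
    | succ k ih => rw [add_comm, zpow_add, zpow_one, Equiv.Perm.mul_apply, hF, ih]
    | pred k ih =>
      rw [sub_eq_add_neg, add_comm, zpow_add, zpow_neg_one, Equiv.Perm.mul_apply, ← hF,
        Equiv.Perm.coe_inv, Equiv.apply_symm_apply, ih]
  have hfixed : ∀ a, a ∈ fixedPoints (Subgroup.zpowers σ) α ↔ σ a = a := by
    refine fun a => ⟨fun h => h ⟨σ, Subgroup.mem_zpowers σ⟩, ?_⟩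
    rintro h ⟨_, k, rfl⟩
    exact σ.zpow_apply_eq_self_of_apply_eq_self h k
  rw [hG.sum_eq_sum_fixedPoints hFzpow hM]
  simp only [hfixed]

namespace pCommutatorAddSubgroup

variable {A : Type*} [Ring A] (p : ℕ)

theorem nsmul_mem (c : A) : p • c ∈ pCommutatorAddSubgroup p A :=
  AddSubgroup.subset_closure (Or.inl ⟨c, rfl⟩)

theorem mul_sub_mul_mem (x y : A) : x * y - y * x ∈ pCommutatorAddSubgroup p A :=
  AddSubgroup.subset_closure (Or.inr ⟨x, y, rfl⟩)

theorem quotient_nsmul_eq_zero (m : A ⧸ pCommutatorAddSubgroup p A) : p • m = 0 := by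
  induction m using QuotientAddGroup.induction_on with
  | H c => exact (QuotientAddGroup.eq_zero_iff _).mpr (nsmul_mem p c)

theorem list_prod_sub_prod_rotate_mem (l : List A) :
    l.prod - (l.rotate 1).prod ∈ pCommutatorAddSubgroup p A := by
  cases l with
  | nil => simp
  | cons a l =>
    simpa [List.prod_append] using mul_sub_mul_mem p a l.prod

variable {p}

theorem mk'_sum_pow (hp : p.Prime) {ι : Type*} [Fintype ι] (f : ι → A) :
    QuotientAddGroup.mk' (pCommutatorAddSubgroup p A) ((∑ i, f i) ^ p) =
      ∑ i, QuotientAddGroup.mk' (pCommutatorAddSubgroup p A) (f i ^ p) := by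
  classical
  have := Fact.mk hp
  have : NeZero p := ⟨hp.ne_zero⟩
  set π := QuotientAddGroup.mk' (pCommutatorAddSubgroup p A)
  have hrot : ∀ w, π (List.ofFn (f ∘ wordRotation p ι w)).prod = π (List.ofFn (f ∘ w)).prod := by
    intro w
    rw [wordRotation_apply, ← Function.comp_assoc, List.ofFn_comp_finRotate, eq_comm,
      QuotientAddGroup.mk'_apply, QuotientAddGroup.mk'_apply, QuotientAddGroup.eq_iff_sub_mem]
    exact list_prod_sub_prod_rotate_mem p _
  have hfixed : ({w | wordRotation p ι w = w} : Finset (Fin p → ι)) =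
      univ.image (Function.const _) := by
    ext w
    simp only [mem_filter, mem_univ, true_and, mem_image]
    exact ⟨fun hw => ⟨w 0, (eq_const_of_wordRotation_eq hw).symm⟩, by rintro ⟨i, rfl⟩; rfl⟩
  rw [Fintype.sum_pow_eq_sum_prod_ofFn, map_sum, Equiv.Perm.sum_eq_sum_fixed_of_pow_eq_one
    (wordRotation_pow_self p ι) hrot (quotient_nsmul_eq_zero p), hfixed,
    sum_image fun _ _ _ _ h => Function.const_injective h]
  refine sum_congr rfl fun i _ => ?_
  rw [Function.comp_const, ← List.prod_replicate, ← List.ofFn_const]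
  rfl

def powAddHom (hp : p.Prime) : A →+ A ⧸ pCommutatorAddSubgroup p A where
  toFun a := (a ^ p : A)
  map_zero' := by simp [hp.ne_zero]
  map_add' x y := by simpa [Fin.sum_univ_two] using mk'_sum_pow hp ![x, y]

theorem powAddHom_apply (hp : p.Prime) (a : A) :
    powAddHom hp a = (a ^ p : A) :=
  rfl

theorem le_ker_powAddHom (hp : p.Prime) : pCommutatorAddSubgroup p A ≤ (powAddHom hp).ker := by
  obtain ⟨n, rfl⟩ := Nat.exists_eq_add_one_of_ne_zero hp.ne_zero
  refine (AddSubgroup.closure_le _).mpr ?_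
  rintro _ (⟨c, rfl⟩ | ⟨x, y, rfl⟩) <;> rw [SetLike.mem_coe, AddMonoidHom.mem_ker]
  · rw [powAddHom_apply, QuotientAddGroup.eq_zero_iff, pow_succ, mul_smul_comm]
    exact nsmul_mem _ _
  · have hxy : (x * y) ^ (n + 1) = (x * y) ^ n * x * y := by rw [pow_succ, mul_assoc]
    have hyx : (y * x) ^ (n + 1) = y * ((x * y) ^ n * x) := by
      rw [pow_succ', mul_pow_mul, mul_assoc]
    rw [map_sub, powAddHom_apply, powAddHom_apply, ← QuotientAddGroup.mk_sub, hxy, hyx,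
      QuotientAddGroup.eq_zero_iff]
    exact mul_sub_mul_mem _ _ _

end pCommutatorAddSubgroup

theorem stmt_8 (p : ℕ) (hp : p.Prime) (A : Type*) [Ring A] (a b : A)
    (h : a - b ∈ pCommutatorAddSubgroup p A) :
    a ^ p - b ^ p ∈ pCommutatorAddSubgroup p A := by
  have hab : pCommutatorAddSubgroup.powAddHom hp (a - b) = 0 :=
    pCommutatorAddSubgroup.le_ker_powAddHom hp h
  rwa [map_sub, pCommutatorAddSubgroup.powAddHom_apply, pCommutatorAddSubgroup.powAddHom_apply,
    ← QuotientAddGroup.mk_sub, QuotientAddGroup.eq_zero_iff] at hab
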